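/- Let G be a graph, r ∈ V(G), and G⁺ = G plus a universal vertex x. Suppose x ∈ ℝ^{E(G)}_{≥0} and z ∈ ℝ^{A(G⁺)}_{≥0} (A(G⁺) the set of orientations of edges of G⁺) satisfy: z_{(r,v)} = 0 for all neighbors v of r; x_{vw} = z_{(v,w)} + z_{(w,v)} for all vw ∈ E(G); and Σ_{w ∈ N(v)} z_{(v,w)} = 1 for all v ∈ V(G⁺) \ {r}. Then for every subset U ⊆ V(G) with r ∈ U: Σ_{vw ∈ E(U)} x_{vw} ≤ |U| − 1. -/

import Mathlib

/-!
Each edge `vw` of `E(U)` splits its weight `x_vw = z_(v,w) + z_(w,v)` between its two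
orientations, so `∑_{E(U)} x` is the total `z`-weight of the arcs of `G` inside `U`, grouped
by tail. The arcs with tail `r` carry no weight, and the arcs with any other tail `v` carry
at most the total weight `1` leaving `v` in `G⁺`; summing over `U \ {r}` gives `|U| - 1`.
-/

open scoped Classical

/-- The graph `G⁺` obtained from `G` by adding a new vertex (`none`) adjacent to
every vertex of `G`. -/
def addUniversal {V : Type} (G : SimpleGraph V) : SimpleGraph (Option V) where
  Adj x y :=
    match x, y with
    | some v, some w => G.Adj v w
    | some _, none => True
    | none, some _ => True
    | none, none => False
  symm := by
    constructor
    rintro (_ | v) (_ | w) h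
    · exact h
    · trivial
    · trivial
    · exact h.symm
  loopless := by
    constructor
    rintro (_ | v) h
    · exact h
    · exact G.loopless.irrefl _ h

/-!
Each edge `vw` of `E(U)` splits its weight `x_vw = z_(v,w) + z_(w,v)` between its two
orientations, so `∑_{E(U)} x` is the total `z`-weight of the arcs of `G` inside `U`, grouped
by tail. The arcs with tail `r` carry no weight, and the arcs with any other tail `v` carry
at most the total weight `1` leaving `v` in `G⁺`; summing over `U \ {r}` gives `|U| - 1`.
-/

open Finset

theorem sum_edges_within_eq_sum_sum_adj {V M : Type*} [Fintype V] [AddCommMonoid M]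
    (G : SimpleGraph V) (U : Finset V) (x : Sym2 V → M) (g : V → V → M)
    (hxg : ∀ v w, G.Adj v w → x s(v, w) = g v w + g w v) :
    ∑ e ∈ univ.filter (fun e : Sym2 V => e ∈ G.edgeSet ∧ ∀ v ∈ e, v ∈ U), x e
      = ∑ v ∈ U, ∑ w ∈ U with G.Adj v w, g v w := by
  set E := univ.filter (fun e : Sym2 V => e ∈ G.edgeSet ∧ ∀ v ∈ e, v ∈ U)
  set A := (U ×ˢ U).filter (fun p => G.Adj p.1 p.2)
  have hmaps : ∀ p ∈ A, s(p.1, p.2) ∈ E := by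
    rintro ⟨v, w⟩ hp
    simp only [A, mem_filter, mem_product] at hp
    simp only [E, mem_filter, mem_univ, true_and, SimpleGraph.mem_edgeSet, Sym2.forall_mem_pair]
    exact ⟨hp.2, hp.1⟩
  have hfiber : ∀ e ∈ E, x e = ∑ p ∈ A with s(p.1, p.2) = e, g p.1 p.2 := by
    intro e he
    induction e using Sym2.inductionOn with
    | hf v w =>
      simp only [E, mem_filter, mem_univ, true_and, SimpleGraph.mem_edgeSet,
        Sym2.forall_mem_pair] at he
      obtain ⟨hvw, hv, hw⟩ := he
      have hA : A.filter (fun p => s(p.1, p.2) = s(v, w)) = {(v, w), (w, v)} := by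
        ext ⟨a, b⟩
        simp only [A, mem_filter, mem_product, mem_insert, mem_singleton, Prod.mk.injEq,
          Sym2.eq_iff]
        constructor
        · exact fun h => h.2
        · rintro (⟨rfl, rfl⟩ | ⟨rfl, rfl⟩)
          · exact ⟨⟨⟨hv, hw⟩, hvw⟩, Or.inl ⟨rfl, rfl⟩⟩
          · exact ⟨⟨⟨hw, hv⟩, hvw.symm⟩, Or.inr ⟨rfl, rfl⟩⟩
      rw [hA, sum_pair (by simp [G.ne_of_adj hvw]), hxg v w hvw]
  rw [sum_congr rfl hfiber, sum_fiberwise_of_maps_to hmaps, sum_filter, sum_product]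
  simp only [sum_filter]

theorem sum_adj_le_sum_addUniversal_adj {V : Type} [Fintype V] (G : SimpleGraph V) (v : V)
    (s : Finset V) (f : Option V → ℝ) (hf : ∀ b, 0 ≤ f b) :
    ∑ w ∈ s with G.Adj v w, f (some w)
      ≤ ∑ b : Option V, if (addUniversal G).Adj (some v) b then f b else 0 := by
  have hnn : ∀ b, 0 ≤ if (addUniversal G).Adj (some v) b then f b else 0 :=
    fun b => ite_nonneg (hf b) le_rfl
  calc ∑ w ∈ s with G.Adj v w, f (some w)
      = ∑ w ∈ s, if (addUniversal G).Adj (some v) (some w) then f (some w) else 0 :=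
        sum_filter _ _
    _ ≤ ∑ w : V, if (addUniversal G).Adj (some v) (some w) then f (some w) else 0 :=
        sum_le_sum_of_subset_of_nonneg (subset_univ s) fun w _ _ => hnn (some w)
    _ ≤ _ := by
        rw [Fintype.sum_option]
        exact le_add_of_nonneg_left (hnn none)

theorem stmt_18_general {V : Type} [Fintype V] (G : SimpleGraph V) (r : V)
    (x : Sym2 V → ℝ) (z : Option V → Option V → ℝ)
    (hznn : ∀ a b : Option V, 0 ≤ z a b)
    (hzr : ∀ b : Option V, (addUniversal G).Adj (some r) b → z (some r) b = 0)
    (hxz : ∀ v w : V, G.Adj v w →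
      x s(v, w) = z (some v) (some w) + z (some w) (some v))
    (hflow : ∀ a : Option V, a ≠ some r →
      ∑ b : Option V, (if (addUniversal G).Adj a b then z a b else 0) = 1) :
    ∀ U : Finset V, r ∈ U →
      ∑ e ∈ Finset.univ.filter
          (fun e : Sym2 V => e ∈ G.edgeSet ∧ ∀ v ∈ e, v ∈ U), x e
        ≤ (U.card : ℝ) - 1 := by
  intro U hrU
  have hrow_r : ∑ w ∈ U with G.Adj r w, z (some r) (some w) = 0 :=
    sum_eq_zero fun w hw => hzr (some w) (mem_filter.1 hw).2
  have hrow : ∀ v ∈ U.erase r, ∑ w ∈ U with G.Adj v w, z (some v) (some w) ≤ 1 :=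
    fun v hv => (sum_adj_le_sum_addUniversal_adj G v U _ (hznn (some v))).trans_eq
      (hflow (some v) (Option.some_injective _ |>.ne (ne_of_mem_erase hv)))
  rw [sum_edges_within_eq_sum_sum_adj G U x (fun v w => z (some v) (some w)) hxz,
    ← add_sum_erase U _ hrU, hrow_r, zero_add]
  calc _ ≤ (U.erase r).card • (1 : ℝ) := sum_le_card_nsmul _ _ _ hrow
    _ = U.card - 1 := by
      rw [card_erase_of_mem hrU, nsmul_one, Nat.cast_pred (card_pos.2 ⟨r, hrU⟩)]

theorem stmt_18 {V : Type} [Fintype V] (G : SimpleGraph V) (r : V)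
    (x : Sym2 V → ℝ) (z : Option V → Option V → ℝ)
    (hxnn : ∀ e, 0 ≤ x e)
    (hznn : ∀ a b : Option V, 0 ≤ z a b)
    (hzr : ∀ b : Option V, (addUniversal G).Adj (some r) b → z (some r) b = 0)
    (hxz : ∀ v w : V, G.Adj v w →
      x s(v, w) = z (some v) (some w) + z (some w) (some v))
    (hflow : ∀ a : Option V, a ≠ some r →
      ∑ b : Option V, (if (addUniversal G).Adj a b then z a b else 0) = 1) :
    ∀ U : Finset V, r ∈ U →
      ∑ e ∈ Finset.univ.filter
          (fun e : Sym2 V => e ∈ G.edgeSet ∧ ∀ v ∈ e, v ∈ U), x e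
        ≤ (U.card : ℝ) - 1 :=
  stmt_18_general G r x z hznn hzr hxz hflow
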